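/- For every n ≥ 1 and every i with 1 ≤ i ≤ n one has τₙ ∘ σᵢ = σ_{i-1} ∘ τ_{n+1} as linear maps H^{⊗(n+1)} → H^{⊗n}. -/

import Mathlib

/-!
Let `H` be a Hopf algebra over `ℂ` with coproduct `Δ = Coalgebra.comul`, counit
`ε = Coalgebra.counit`, antipode `S = HopfAlgebra.antipode` and unit `1`.  We fix a
character `δ : H →ₐ[ℂ] ℂ`.  The `δ`-twisted antipode is the linear map
`S̃(h) = ∑ δ(h₍₁₎) S(h₍₂₎)`.
-/

open TensorProduct

noncomputable section

variable (H : Type) [Ring H] [HopfAlgebra ℂ H]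

/-- The `δ`-twisted antipode `S̃(h) = ∑ δ(h₍₁₎) S(h₍₂₎)`. -/
def twistedAntipode (δ : H →ₐ[ℂ] ℂ) : H →ₗ[ℂ] H :=
  (TensorProduct.lid ℂ H).toLinearMap ∘ₗ
    (TensorProduct.map δ.toLinearMap (HopfAlgebra.antipode (R := ℂ))) ∘ₗ
      Coalgebra.comul

/-- A type bundled with a `ℂ`-algebra structure (used to form iterated tensor powers). -/
structure AlgPack : Type 1 where
  carrier : Type
  [ring : Ring carrier]
  [alg : Algebra ℂ carrier]

attribute [instance] AlgPack.ring AlgPack.alg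

/-- The iterated tensor powers of `H`: `XB H n` bundles `H^{⊗(n+1)}` together with its
(componentwise) algebra structure coming from `Algebra.TensorProduct`. -/
def XB : ℕ → AlgPack
  | 0 => ⟨H⟩
  | n + 1 => ⟨H ⊗[ℂ] (XB n).carrier⟩

/-- `X H n` is the tensor power `H^{⊗(n+1)}`; its multiplication `*` is the componentwise
product and its unit `1` is `1 ⊗ ... ⊗ 1`. -/
abbrev X (n : ℕ) : Type := (XB H n).carrier

/-- The pure tensor `h 0 ⊗ h 1 ⊗ ... ⊗ h n ∈ H^{⊗(n+1)}`. -/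
def tp : ∀ n, (Fin (n + 1) → H) → X H n
  | 0, h => h 0
  | n + 1, h => h 0 ⊗ₜ[ℂ] tp n (Fin.tail h)

/-- The `n`-fold iterated coproduct `Δ⁽ⁿ⁾ : H →ₗ H^{⊗(n+1)}`. -/
def Δiter : ∀ n, H →ₗ[ℂ] X H n
  | 0 => LinearMap.id
  | n + 1 => (TensorProduct.map LinearMap.id (Δiter n)) ∘ₗ Coalgebra.comul

/-- The face operators `δᵢ : H^{⊗(n+1)} →ₗ H^{⊗(n+2)}` (`0 ≤ i ≤ n + 2`):
`δ₀ = 1 ⊗ ·`, `δⱼ` applies `Δ` to the `j`-th factor for `1 ≤ j ≤ n + 1`, and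
`δ_{n+2}` appends `1` on the right. -/
def dX : ℕ → ∀ n, X H n →ₗ[ℂ] X H (n + 1)
  | 0, n => TensorProduct.mk ℂ H (X H n) 1
  | 1, 0 => (Coalgebra.comul : H →ₗ[ℂ] H ⊗[ℂ] H)
  | 1, n + 1 => (TensorProduct.assoc ℂ H H (X H n)).toLinearMap ∘ₗ
      (TensorProduct.map Coalgebra.comul LinearMap.id)
  | _ + 2, 0 => (TensorProduct.mk ℂ H H).flip 1
  | i + 2, n + 1 => TensorProduct.map LinearMap.id (dX (i + 1) n)

/-- The degeneracy operators `σᵢ : H^{⊗(n+2)} →ₗ H^{⊗(n+1)}` (`0 ≤ i ≤ n + 1`):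
`σᵢ` applies the counit `ε` to the `(i+1)`-st factor. -/
def sX : ℕ → ∀ n, X H (n + 1) →ₗ[ℂ] X H n
  | 0, n => (TensorProduct.lid ℂ (X H n)).toLinearMap ∘ₗ
      TensorProduct.map Coalgebra.counit LinearMap.id
  | _ + 1, 0 => (TensorProduct.rid ℂ H).toLinearMap ∘ₗ
      TensorProduct.map LinearMap.id (Coalgebra.counit : H →ₗ[ℂ] ℂ)
  | i + 1, n + 1 => TensorProduct.map LinearMap.id (sX i n)

/-- Appending `1 ∈ H` on the right: `h¹ ⊗ ... ⊗ h^{n+1} ↦ h¹ ⊗ ... ⊗ h^{n+1} ⊗ 1`. -/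
def appOne : ∀ n, X H n →ₗ[ℂ] X H (n + 1)
  | 0 => (TensorProduct.mk ℂ H H).flip 1
  | n + 1 => TensorProduct.map LinearMap.id (appOne n)

/-- The cyclic operator `τₙ : H^{⊗n} →ₗ H^{⊗n}` (here at index `X H n = H^{⊗(n+1)}`):
`τ(h¹ ⊗ ... ⊗ h^{n+1}) = Δ⁽ⁿ⁾(S̃(h¹)) · (h² ⊗ ... ⊗ h^{n+1} ⊗ 1)`,
where `·` is the componentwise product of `H^{⊗(n+1)}`. -/
def tauX (δ : H →ₐ[ℂ] ℂ) : ∀ n, X H n →ₗ[ℂ] X H n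
  | 0 => twistedAntipode H δ
  | n + 1 => LinearMap.mul' ℂ (X H (n + 1)) ∘ₗ
      TensorProduct.map (Δiter H (n + 1) ∘ₗ twistedAntipode H δ) (appOne H n)

/-!
The degeneracy `σ_{i-1}` applies `ε` in one tensor slot, so it is an algebra map of
`H^{⊗(n+1)}`; by the counit axiom it sends `Δ^{(n)}` to `Δ^{(n-1)}`, and for `i ≤ n` it commutes
with appending `1`. Hence
`σ_{i-1}(Δ^{(n)}(S̃h¹) · (h² ⊗ … ⊗ 1)) = Δ^{(n-1)}(S̃h¹) · (σ_{i-1}(h² ⊗ …) ⊗ 1) = τ(σ_i(h¹ ⊗ …))`.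
-/

@[simp]
lemma sX_zero_tmul (n : ℕ) (h : H) (x : X H n) :
    sX H 0 n (h ⊗ₜ[ℂ] x) = Coalgebra.counit (R := ℂ) h • x := rfl

@[simp]
lemma sX_succ_succ_tmul (j n : ℕ) (h : H) (x : X H (n + 1)) :
    sX H (j + 1) (n + 1) (h ⊗ₜ[ℂ] x) = h ⊗ₜ[ℂ] sX H j n x := rfl

@[simp]
lemma appOne_succ_tmul (n : ℕ) (h : H) (x : X H n) :
    appOne H (n + 1) (h ⊗ₜ[ℂ] x) = h ⊗ₜ[ℂ] appOne H n x := rfl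

lemma Δiter_succ_apply (n : ℕ) (h : H) :
    Δiter H (n + 1) h = TensorProduct.map LinearMap.id (Δiter H n) (Coalgebra.comul h) := rfl

lemma sX_comp_Δiter : ∀ j n, sX H j n ∘ₗ Δiter H (n + 1) = Δiter H n
  | 0, n => by
    have sX_zero_map_Δiter (t : H ⊗[ℂ] H) :
        sX H 0 n (TensorProduct.map LinearMap.id (Δiter H n) t)
          = Δiter H n (TensorProduct.lid ℂ H ((Coalgebra.counit (R := ℂ)).rTensor H t)) := by
      induction t using TensorProduct.induction_on with
      | zero => simp only [map_zero]; exact map_zero (sX H 0 n)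
      | tmul a x => simp
      | add t t' ht ht' =>
        simp only [map_add, ← ht, ← ht']
        exact map_add (sX H 0 n) _ _
    ext h
    rw [LinearMap.comp_apply, Δiter_succ_apply, sX_zero_map_Δiter, Coalgebra.rTensor_counit_comul]
    simp
  | j + 1, 0 => by
    ext h
    change TensorProduct.rid ℂ H ((Coalgebra.counit (R := ℂ) (A := H)).lTensor H
      (TensorProduct.map LinearMap.id LinearMap.id (Coalgebra.comul h))) = h
    simp [Coalgebra.lTensor_counit_comul]
  | j + 1, n + 1 => by
    change TensorProduct.map LinearMap.id (sX H j n) ∘ₗ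
        TensorProduct.map LinearMap.id (Δiter H (n + 1)) ∘ₗ Coalgebra.comul = _
    rw [← LinearMap.comp_assoc, ← TensorProduct.map_comp, sX_comp_Δiter j n,
      LinearMap.id_comp]
    rfl

lemma sX_Δiter_apply (j n : ℕ) (h : H) : sX H j n (Δiter H (n + 1) h) = Δiter H n h :=
  LinearMap.congr_fun (sX_comp_Δiter H j n) h

lemma sX_comp_appOne : ∀ j k, j ≤ k + 1 →
    sX H j (k + 1) ∘ₗ appOne H (k + 1) = appOne H k ∘ₗ sX H j k
  | 0, k, _ => by
    apply TensorProduct.ext'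
    intro a x
    change sX H 0 (k + 1) (appOne H (k + 1) (a ⊗ₜ x)) = appOne H k (sX H 0 k (a ⊗ₜ x))
    simp
  | 1, 0, _ => by
    apply TensorProduct.ext'
    intro a (b : H)
    change a ⊗ₜ[ℂ] (Coalgebra.counit (R := ℂ) b • (1 : H))
      = (Coalgebra.counit (R := ℂ) b • a) ⊗ₜ[ℂ] (1 : H)
    rw [tmul_smul, smul_tmul']
  | j + 2, 0, h => absurd h (by omega)
  | j + 1, k + 1, h => by
    change TensorProduct.map LinearMap.id (sX H j (k + 1)) ∘ₗ
        TensorProduct.map LinearMap.id (appOne H (k + 1))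
      = TensorProduct.map LinearMap.id (appOne H k) ∘ₗ TensorProduct.map LinearMap.id (sX H j k)
    rw [← TensorProduct.map_comp, ← TensorProduct.map_comp, sX_comp_appOne j k (by omega)]

lemma sX_appOne_apply {j k : ℕ} (hj : j ≤ k + 1) (x : X H (k + 1)) :
    sX H j (k + 1) (appOne H (k + 1) x) = appOne H k (sX H j k x) :=
  LinearMap.congr_fun (sX_comp_appOne H j k hj) x

def sXAlgHom : ℕ → ∀ n : ℕ, X H (n + 1) →ₐ[ℂ] X H n
  | 0, n => (Algebra.TensorProduct.lid ℂ (X H n)).toAlgHom.comp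
      (Algebra.TensorProduct.map (Bialgebra.counitAlgHom ℂ H) (AlgHom.id ℂ (X H n)))
  | _ + 1, 0 => (Algebra.TensorProduct.rid ℂ ℂ H).toAlgHom.comp
      (Algebra.TensorProduct.map (AlgHom.id ℂ H) (Bialgebra.counitAlgHom ℂ H))
  | i + 1, n + 1 => Algebra.TensorProduct.map (AlgHom.id ℂ H) (sXAlgHom i n)

lemma sXAlgHom_toLinearMap : ∀ (i n : ℕ), (sXAlgHom H i n).toLinearMap = sX H i n
  | 0, _ => rfl
  | _ + 1, 0 => rfl
  | i + 1, n + 1 => by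
    change TensorProduct.map LinearMap.id (sXAlgHom H i n).toLinearMap = _
    rw [sXAlgHom_toLinearMap i n]
    rfl

lemma sX_mul (i n : ℕ) (a b : X H (n + 1)) :
    sX H i n (a * b) = sX H i n a * sX H i n b := by
  simp only [← sXAlgHom_toLinearMap, AlgHom.toLinearMap_apply, map_mul]

lemma tauX_succ_tmul (δ : H →ₐ[ℂ] ℂ) (n : ℕ) (h : H) (x : X H n) :
    tauX H δ (n + 1) (h ⊗ₜ[ℂ] x) = Δiter H (n + 1) (twistedAntipode H δ h) * appOne H n x :=
  rfl

lemma tauX_zero_comp_sX_one (δ : H →ₐ[ℂ] ℂ) :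
    tauX H δ 0 ∘ₗ sX H 1 0 = sX H 0 0 ∘ₗ tauX H δ 1 := by
  apply TensorProduct.ext'
  intro h x
  change tauX H δ 0 (sX H 1 0 (h ⊗ₜ x)) = sX H 0 0 (tauX H δ (0 + 1) (h ⊗ₜ x))
  rw [tauX_succ_tmul, sX_mul, sX_Δiter_apply]
  change twistedAntipode H δ (Coalgebra.counit (R := ℂ) (A := H) x • h)
    = twistedAntipode H δ h * (Coalgebra.counit (R := ℂ) (A := H) x • (1 : H))
  rw [map_smul, mul_smul_comm, mul_one]

lemma tauX_succ_comp_sX_succ (δ : H →ₐ[ℂ] ℂ) (j k : ℕ) (hj : j ≤ k + 1) :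
    tauX H δ (k + 1) ∘ₗ sX H (j + 1) (k + 1) = sX H j (k + 1) ∘ₗ tauX H δ (k + 2) := by
  apply TensorProduct.ext'
  intro h x
  change tauX H δ (k + 1) (sX H (j + 1) (k + 1) (h ⊗ₜ x))
    = sX H j (k + 1) (tauX H δ (k + 2) (h ⊗ₜ x))
  rw [sX_succ_succ_tmul, tauX_succ_tmul, tauX_succ_tmul, sX_mul, sX_Δiter_apply,
    sX_appOne_apply H hj]

/-- For every `n ≥ 1` and every `i` with `1 ≤ i ≤ n` one has
`τₙ ∘ σᵢ = σ_{i-1} ∘ τ_{n+1}` as linear maps `H^{⊗(n+1)} → H^{⊗n}` (here `n = m + 1`,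
`H^{⊗(n+1)} = X H (m+1)`, `H^{⊗n} = X H m`). -/
theorem tauX_comp_s (δ : H →ₐ[ℂ] ℂ) :
    ∀ (m i : ℕ), 1 ≤ i → i ≤ m + 1 →
      tauX H δ m ∘ₗ sX H i m = sX H (i - 1) m ∘ₗ tauX H δ (m + 1) := by
  intro m i hi him
  obtain ⟨j, rfl⟩ : ∃ j, i = j + 1 := ⟨i - 1, by omega⟩
  rw [Nat.add_sub_cancel]
  cases m with
  | zero =>
    obtain rfl : j = 0 := by omega
    exact tauX_zero_comp_sX_one H δ
  | succ k => exact tauX_succ_comp_sX_succ H δ j k (by omega)
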